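/- arXiv:1905.10809 — 2 statements merged into one kernel-verified Lean document; each statement's English description precedes it below -/
import Mathlib

section
/- In the Min-CS problem (minimize cs(S) = Σ_i S(J_i^{|C_i|})^2 over feasible schedules of unit-time job chains), an optimal schedule is obtained by processing the chains consecutively in nondecreasing order of chain length. That is, if chain lengths are L_1 ≤ L_2 ≤ ... ≤ L_n and chain i is scheduled entirely in the time interval following chains 1,...,i−1, then Σ_i (L_1 + ... + L_i)^2 ≤ cs(S) for every feasible schedule S. -/
/-- Feasibility of a Min-WCS schedule of unit-time job chains: a bijection from
the jobs (job `j` of chain `i`, `1 ≤ j ≤ L i`) onto `{1, …, T}` (`T = ∑ L i`)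
respecting chain precedence. -/
def JobFeasible (n : ℕ) (L : Fin n → ℕ) (S : Fin n → ℕ → ℕ) : Prop :=
  (∀ i j, 1 ≤ j → j ≤ L i → S i j ∈ Finset.Icc 1 (∑ i, L i)) ∧
  (∀ i j i' j', 1 ≤ j → j ≤ L i → 1 ≤ j' → j' ≤ L i' →
    S i j = S i' j' → i = i' ∧ j = j') ∧
  (∀ t ∈ Finset.Icc 1 (∑ i, L i), ∃ i j, 1 ≤ j ∧ j ≤ L i ∧ S i j = t) ∧
  (∀ i j, 1 ≤ j → j < L i → S i j < S i (j + 1))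

/-- Total weighted completion time. -/
def wc (n : ℕ) (L : Fin n → ℕ) (w : Fin n → ℕ → ℕ) (S : Fin n → ℕ → ℕ) : ℕ :=
  ∑ i, ∑ j ∈ Finset.Icc 1 (L i), w i j * S i j

/-- Total squared completion time of the leaf (last) jobs. -/
def cs (n : ℕ) (L : Fin n → ℕ) (S : Fin n → ℕ → ℕ) : ℕ :=
  ∑ i, S i (L i) ^ 2

/-- The Min-WCS objective. -/
def wcs (n : ℕ) (L : Fin n → ℕ) (w : Fin n → ℕ → ℕ) (S : Fin n → ℕ → ℕ) : ℕ :=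
  wc n L w S + cs n L S

/-- A strictly monotone map between `Fin` types does not decrease indices. -/
lemma strictMono_fin_le_apply {m n : ℕ} {g : Fin m → Fin n} (hg : StrictMono g) :
    ∀ (k : ℕ) (j : Fin m), (j : ℕ) = k → k ≤ (g j : ℕ) := by
  intro k
  induction k with
  | zero => intro j _; exact Nat.zero_le _
  | succ k ih =>
    intro j hj
    have hk : k < m := by omega
    have h1 : (g ⟨k, hk⟩ : ℕ) < (g j : ℕ) := by
      exact hg (by simp [Fin.lt_def, hj])
    have h2 := ih ⟨k, hk⟩ rfl
    omega

/-- Sum of a monotone function over any set of cardinality `k+1` dominates the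
sum over the first `k+1` indices. -/
lemma sum_Iic_le_sum_of_card {n : ℕ} (L : Fin n → ℕ) (hmono : Monotone L)
    (k : Fin n) (B : Finset (Fin n)) (hB : B.card = k.1 + 1) :
    ∑ j ∈ Finset.Iic k, L j ≤ ∑ i ∈ B, L i := by
  classical
  have hk : k.1 + 1 ≤ n := k.2
  set e := B.orderEmbOfFin hB with he
  have hBimg : Finset.image (fun j => e j) Finset.univ = B := by
    apply Finset.coe_injective
    rw [Finset.coe_image, Finset.coe_univ, Set.image_univ]
    exact Finset.range_orderEmbOfFin B hB
  have hIimg : Finset.image (fun j : Fin (k.1 + 1) => Fin.castLE hk j) Finset.univ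
      = Finset.Iic k := by
    ext x
    simp only [Finset.mem_image, Finset.mem_univ, true_and, Finset.mem_Iic]
    constructor
    · rintro ⟨j, rfl⟩
      exact Fin.le_def.mpr (by simpa using Nat.lt_succ_iff.mp j.2)
    · intro hx
      exact ⟨⟨x.1, Nat.lt_succ_of_le (Fin.le_def.mp hx)⟩, by ext; simp⟩
  rw [← hBimg, ← hIimg, Finset.sum_image (by intro a _ b _ h; exact Fin.castLE_injective hk h),
    Finset.sum_image (by intro a _ b _ h; exact e.injective h)]
  apply Finset.sum_le_sum
  intro j _
  apply hmono
  rw [Fin.le_def]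
  simpa using strictMono_fin_le_apply e.strictMono j.1 j rfl

theorem minCS_shortest_chain_first_optimal
    (n : ℕ) (L : Fin n → ℕ) (hL : ∀ i, 1 ≤ L i)
    (hmono : Monotone L) :
    ∀ S : Fin n → ℕ → ℕ, JobFeasible n L S →
      ∑ i, (∑ k ∈ Finset.Iic i, L k) ^ 2 ≤ cs n L S := by
  classical
  intro S hS
  obtain ⟨hrange, hinj, -, hchain⟩ := hS
  -- monotonicity along each chain
  have hstep : ∀ i j j', 1 ≤ j → j ≤ j' → j' ≤ L i → S i j ≤ S i j' := by
    intro i j j' h1 hle hle'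
    induction j' with
    | zero => omega
    | succ j' ih =>
      rcases Nat.eq_or_lt_of_le hle with rfl | h
      · exact le_rfl
      · have h2 : S i j ≤ S i j' := ih (by omega) (by omega)
        have h3 := hchain i j' (by omega) (by omega)
        omega
  set c : Fin n → ℕ := fun i => S i (L i) with hc
  -- counting lemma
  have hcount : ∀ (A : Finset (Fin n)) (M : ℕ), (∀ i ∈ A, c i ≤ M) →
      ∑ i ∈ A, L i ≤ M := by
    intro A M hM
    have hdisj : ∀ i ∈ A, ∀ i' ∈ A, i ≠ i' →
        Disjoint ((Finset.Icc 1 (L i)).image (S i)) ((Finset.Icc 1 (L i')).image (S i')) := by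
      intro i _ i' _ hne
      rw [Finset.disjoint_left]
      rintro t ht ht'
      simp only [Finset.mem_image, Finset.mem_Icc] at ht ht'
      obtain ⟨j, ⟨hj1, hj2⟩, rfl⟩ := ht
      obtain ⟨j', ⟨hj1', hj2'⟩, hj'⟩ := ht'
      exact hne ((hinj i j i' j' hj1 hj2 hj1' hj2' hj'.symm).1)
    have hcard : ∑ i ∈ A, L i = (A.biUnion (fun i => (Finset.Icc 1 (L i)).image (S i))).card := by
      rw [Finset.card_biUnion hdisj]
      apply Finset.sum_congr rfl
      intro i _
      rw [Finset.card_image_of_injOn, Nat.card_Icc]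
      · omega
      · intro j hj j' hj' hjj'
        simp only [Finset.coe_Icc, Set.mem_Icc] at hj hj'
        exact (hinj i j i j' hj.1 hj.2 hj'.1 hj'.2 hjj').2
    have hsub : A.biUnion (fun i => (Finset.Icc 1 (L i)).image (S i)) ⊆ Finset.Icc 1 M := by
      intro t ht
      simp only [Finset.mem_biUnion, Finset.mem_image, Finset.mem_Icc] at ht ⊢
      obtain ⟨i, hiA, j, ⟨hj1, hj2⟩, rfl⟩ := ht
      have h1 := hrange i j hj1 hj2
      simp only [Finset.mem_Icc] at h1
      have h2 : S i j ≤ c i := hstep i j (L i) hj1 hj2 le_rfl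
      exact ⟨h1.1, le_trans h2 (hM i hiA)⟩
    calc ∑ i ∈ A, L i = _ := hcard
      _ ≤ (Finset.Icc 1 M).card := Finset.card_le_card hsub
      _ = M := by rw [Nat.card_Icc]; omega
  set σ := Tuple.sort c with hσ
  have hσmono : Monotone (c ∘ σ) := Tuple.monotone_sort c
  have key : ∀ k : Fin n, ∑ j ∈ Finset.Iic k, L j ≤ c (σ k) := by
    intro k
    have h1 : ∑ i ∈ (Finset.Iic k).image σ, L i ≤ c (σ k) := by
      apply hcount
      intro i hi
      simp only [Finset.mem_image, Finset.mem_Iic] at hi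
      obtain ⟨j, hj, rfl⟩ := hi
      exact hσmono hj
    refine le_trans ?_ h1
    apply sum_Iic_le_sum_of_card L hmono
    rw [Finset.card_image_of_injective _ σ.injective, Fin.card_Iic]
  calc ∑ i, (∑ k ∈ Finset.Iic i, L k) ^ 2
      ≤ ∑ i, (c (σ i)) ^ 2 :=
        Finset.sum_le_sum (fun i _ => Nat.pow_le_pow_left (key i) 2)
    _ = ∑ i, c i ^ 2 := Equiv.sum_comp σ (fun i => c i ^ 2)
    _ = cs n L S := rfl
end

section
/- Deterministic interleaving gives a 4-approximation for Min-WCS: let S*_wc minimize wc and S*_cs minimize cs over feasible schedules. Define S' by S'(J) = min{2·S*_wc(J), 2·S*_cs(J) − 1} for each job J. Then S' assigns distinct times, respects chain precedence, and the schedule S obtained by compacting S' (replacing each completion time by its rank) satisfies wcs(S) ≤ 4(wc(S*_wc) + cs(S*_cs)) ≤ 4 · min_S wcs(S). -/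
/-- The finset of all jobs. -/
def Jobs (n : ℕ) (L : Fin n → ℕ) : Finset ((_ : Fin n) × ℕ) :=
  Finset.univ.sigma (fun i => Finset.Icc 1 (L i))

/-- The rank of job `(i, j)`'s time among all assigned times:
the number of jobs whose assigned time is at most that of `(i, j)`. -/
def rank (n : ℕ) (L : Fin n → ℕ) (S' : Fin n → ℕ → ℕ) (i : Fin n) (j : ℕ) : ℕ :=
  ((Jobs n L).filter (fun y => S' y.1 y.2 ≤ S' i j)).card

theorem deterministic_interleaving_four_approx
    (n : ℕ) (L : Fin n → ℕ) (hL : ∀ i, 1 ≤ L i) (w : Fin n → ℕ → ℕ)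
    (Swc : Fin n → ℕ → ℕ) (hSwcFeas : JobFeasible n L Swc)
    (hSwcOpt : ∀ S, JobFeasible n L S → wc n L w Swc ≤ wc n L w S)
    (Scs : Fin n → ℕ → ℕ) (hScsFeas : JobFeasible n L Scs)
    (hScsOpt : ∀ S, JobFeasible n L S → cs n L Scs ≤ cs n L S)
    (S' : Fin n → ℕ → ℕ)
    (hS' : ∀ i j, S' i j = min (2 * Swc i j) (2 * Scs i j - 1)) :
    -- S' assigns distinct times to distinct jobs
    (∀ i j i' j', 1 ≤ j → j ≤ L i → 1 ≤ j' → j' ≤ L i' →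
      S' i j = S' i' j' → i = i' ∧ j = j') ∧
    -- S' respects chain precedence
    (∀ i j, 1 ≤ j → j < L i → S' i j < S' i (j + 1)) ∧
    -- the compacted schedule (ranks of S') is feasible and is a 4-approximation
    JobFeasible n L (rank n L S') ∧
    wcs n L w (rank n L S') ≤ 4 * (wc n L w Swc + cs n L Scs) ∧
    (∀ S, JobFeasible n L S → wcs n L w (rank n L S') ≤ 4 * wcs n L w S) := by
  classical
  obtain ⟨hwc1, hwc2, hwc3, hwc4⟩ := hSwcFeas
  obtain ⟨hcs1, hcs2, hcs3, hcs4⟩ := hScsFeas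
  have hwcpos : ∀ i j, 1 ≤ j → j ≤ L i → 1 ≤ Swc i j := fun i j h1 h2 =>
    (Finset.mem_Icc.mp (hwc1 i j h1 h2)).1
  have hcspos : ∀ i j, 1 ≤ j → j ≤ L i → 1 ≤ Scs i j := fun i j h1 h2 =>
    (Finset.mem_Icc.mp (hcs1 i j h1 h2)).1
  have hS'pos : ∀ i j, 1 ≤ j → j ≤ L i → 1 ≤ S' i j := by
    intro i j h1 h2
    have := hwcpos i j h1 h2
    have := hcspos i j h1 h2
    rw [hS']; omega
  have hmemJobs : ∀ x : (_ : Fin n) × ℕ, x ∈ Jobs n L ↔ 1 ≤ x.2 ∧ x.2 ≤ L x.1 := by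
    intro x
    simp [Jobs, Finset.mem_sigma, Finset.mem_Icc]
  -- injectivity of S'
  have hinj : ∀ i j i' j', 1 ≤ j → j ≤ L i → 1 ≤ j' → j' ≤ L i' →
      S' i j = S' i' j' → i = i' ∧ j = j' := by
    intro i j i' j' h1 h2 h3 h4 heq
    rw [hS', hS'] at heq
    have c1 := hcspos i j h1 h2
    have c2 := hcspos i' j' h3 h4
    rcases le_or_gt (2 * Swc i j) (2 * Scs i j - 1) with hA | hA
    · rcases le_or_gt (2 * Swc i' j') (2 * Scs i' j' - 1) with hB | hB
      · exact hwc2 i j i' j' h1 h2 h3 h4 (by omega)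
      · exfalso; omega
    · rcases le_or_gt (2 * Swc i' j') (2 * Scs i' j' - 1) with hB | hB
      · exfalso; omega
      · exact hcs2 i j i' j' h1 h2 h3 h4 (by omega)
  -- precedence for S'
  have hprec : ∀ i j, 1 ≤ j → j < L i → S' i j < S' i (j + 1) := by
    intro i j h1 h2
    have a1 := hwc4 i j h1 h2
    have a2 := hcs4 i j h1 h2
    have c1 := hcspos i j h1 (le_of_lt h2)
    rw [hS', hS']
    omega
  -- injectivity of S' on Jobs, as sigma types
  have hinjS : ∀ x ∈ Jobs n L, ∀ y ∈ Jobs n L, S' x.1 x.2 = S' y.1 y.2 → x = y := by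
    intro x hx y hy h
    obtain ⟨hx1, hx2⟩ := (hmemJobs x).mp hx
    obtain ⟨hy1, hy2⟩ := (hmemJobs y).mp hy
    obtain ⟨e1, e2⟩ := hinj x.1 x.2 y.1 y.2 hx1 hx2 hy1 hy2 h
    exact Sigma.ext e1 (by simp [e2])
  have hcardJobs : (Jobs n L).card = ∑ i, L i := by
    rw [Jobs, Finset.card_sigma]
    simp [Nat.card_Icc]
  -- rank is strictly monotone in S' values on Jobs
  have hrankmono : ∀ x ∈ Jobs n L, ∀ y ∈ Jobs n L, S' x.1 x.2 < S' y.1 y.2 →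
      rank n L S' x.1 x.2 < rank n L S' y.1 y.2 := by
    intro x hx y hy hlt
    apply Finset.card_lt_card
    constructor
    · intro z hz
      rw [Finset.mem_filter] at hz ⊢
      exact ⟨hz.1, le_trans hz.2 (le_of_lt hlt)⟩
    · intro hsub
      have hy' : y ∈ (Jobs n L).filter (fun z => S' z.1 z.2 ≤ S' y.1 y.2) :=
        Finset.mem_filter.mpr ⟨hy, le_refl _⟩
      have := Finset.mem_filter.mp (hsub hy')
      omega
  -- rank x ≤ S' x
  have hrankle : ∀ x ∈ Jobs n L, rank n L S' x.1 x.2 ≤ S' x.1 x.2 := by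
    intro x hx
    have himg : ((Jobs n L).filter (fun y => S' y.1 y.2 ≤ S' x.1 x.2)).card
        = (((Jobs n L).filter (fun y => S' y.1 y.2 ≤ S' x.1 x.2)).image
            (fun y => S' y.1 y.2)).card := by
      rw [Finset.card_image_of_injOn]
      intro a ha b hb h
      exact hinjS a (Finset.mem_filter.mp ha).1 b (Finset.mem_filter.mp hb).1 h
    rw [rank, himg]
    calc (((Jobs n L).filter (fun y => S' y.1 y.2 ≤ S' x.1 x.2)).image
            (fun y => S' y.1 y.2)).card
        ≤ (Finset.Icc 1 (S' x.1 x.2)).card := by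
          apply Finset.card_le_card
          intro t ht
          obtain ⟨y, hy, rfl⟩ := Finset.mem_image.mp ht
          obtain ⟨hyJ, hyle⟩ := Finset.mem_filter.mp hy
          obtain ⟨hy1, hy2⟩ := (hmemJobs y).mp hyJ
          exact Finset.mem_Icc.mpr ⟨hS'pos y.1 y.2 hy1 hy2, hyle⟩
      _ = S' x.1 x.2 := by rw [Nat.card_Icc]; omega
  -- rank x ≥ 1 and ≤ T
  have hrankbnd : ∀ x ∈ Jobs n L, rank n L S' x.1 x.2 ∈ Finset.Icc 1 (∑ i, L i) := by
    intro x hx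
    rw [Finset.mem_Icc]
    constructor
    · have : x ∈ (Jobs n L).filter (fun y => S' y.1 y.2 ≤ S' x.1 x.2) :=
        Finset.mem_filter.mpr ⟨hx, le_refl _⟩
      have := Finset.card_pos.mpr ⟨x, this⟩
      exact this
    · rw [← hcardJobs]
      exact Finset.card_le_card (Finset.filter_subset _ _)
  -- injectivity of rank on Jobs
  have hrankinj : ∀ x ∈ Jobs n L, ∀ y ∈ Jobs n L,
      rank n L S' x.1 x.2 = rank n L S' y.1 y.2 → x = y := by
    intro x hx y hy h
    rcases lt_trichotomy (S' x.1 x.2) (S' y.1 y.2) with hlt | heq | hgt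
    · have := hrankmono x hx y hy hlt; omega
    · exact hinjS x hx y hy heq
    · have := hrankmono y hy x hx hgt; omega
  -- feasibility of rank
  have hfeas : JobFeasible n L (rank n L S') := by
    refine ⟨?_, ?_, ?_, ?_⟩
    · intro i j h1 h2
      exact hrankbnd ⟨i, j⟩ ((hmemJobs ⟨i, j⟩).mpr ⟨h1, h2⟩)
    · intro i j i' j' h1 h2 h3 h4 h
      have := hrankinj ⟨i, j⟩ ((hmemJobs ⟨i, j⟩).mpr ⟨h1, h2⟩)
        ⟨i', j'⟩ ((hmemJobs ⟨i', j'⟩).mpr ⟨h3, h4⟩) h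
      exact ⟨congrArg Sigma.fst this, congrArg Sigma.snd this⟩
    · intro t ht
      have hsurj := Finset.surj_on_of_inj_on_of_card_le
        (s := Jobs n L) (t := Finset.Icc 1 (∑ i, L i))
        (fun x _ => rank n L S' x.1 x.2)
        (fun x hx => hrankbnd x hx)
        (fun x y hx hy h => hrankinj x hx y hy h)
        (by rw [hcardJobs, Nat.card_Icc]; omega)
      obtain ⟨x, hx, hxe⟩ := hsurj t ht
      obtain ⟨h1, h2⟩ := (hmemJobs x).mp hx
      exact ⟨x.1, x.2, h1, h2, hxe.symm⟩
    · intro i j h1 h2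
      exact hrankmono ⟨i, j⟩ ((hmemJobs ⟨i, j⟩).mpr ⟨h1, le_of_lt h2⟩)
        ⟨i, j + 1⟩ ((hmemJobs ⟨i, j + 1⟩).mpr ⟨Nat.succ_le_succ (Nat.zero_le j), h2⟩)
        (hprec i j h1 h2)
  -- the 4-approximation bound
  have hbound : wcs n L w (rank n L S') ≤ 4 * (wc n L w Swc + cs n L Scs) := by
    have hwcb : wc n L w (rank n L S') ≤ 2 * wc n L w Swc := by
      rw [wc, wc, Finset.mul_sum]
      apply Finset.sum_le_sum
      intro i _
      rw [Finset.mul_sum]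
      apply Finset.sum_le_sum
      intro j hj
      rw [Finset.mem_Icc] at hj
      have h1 : rank n L S' i j ≤ S' i j :=
        hrankle ⟨i, j⟩ ((hmemJobs ⟨i, j⟩).mpr ⟨hj.1, hj.2⟩)
      have h2 : S' i j ≤ 2 * Swc i j := by rw [hS']; omega
      calc w i j * rank n L S' i j ≤ w i j * (2 * Swc i j) :=
            Nat.mul_le_mul_left _ (le_trans h1 h2)
        _ = 2 * (w i j * Swc i j) := by ring
    have hcsb : cs n L (rank n L S') ≤ 4 * cs n L Scs := by
      rw [cs, cs, Finset.mul_sum]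
      apply Finset.sum_le_sum
      intro i _
      have hLi := hL i
      have h1 : rank n L S' i (L i) ≤ S' i (L i) :=
        hrankle ⟨i, L i⟩ ((hmemJobs ⟨i, L i⟩).mpr ⟨hLi, le_refl _⟩)
      have h2 : S' i (L i) ≤ 2 * Scs i (L i) := by rw [hS']; omega
      calc rank n L S' i (L i) ^ 2 ≤ (2 * Scs i (L i)) ^ 2 :=
            Nat.pow_le_pow_left (le_trans h1 h2) 2
        _ = 4 * Scs i (L i) ^ 2 := by ring
    rw [wcs]
    omega
  refine ⟨hinj, hprec, hfeas, hbound, ?_⟩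
  intro S hS
  have h1 := hSwcOpt S hS
  have h2 := hScsOpt S hS
  have : wcs n L w S = wc n L w S + cs n L S := rfl
  omega
end
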